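/- arXiv:2512.23203 — 9 statements merged into one kernel-verified Lean document; each statement's English description precedes it below -/
import Mathlib

section
/- Let E, J, R ∈ ℂ^{n×n} with E positive semidefinite, J skew-Hermitian (J = −J*), R positive semidefinite, partitioned conformally as E = [[E11, E12],[E12*, E22]], J = [[J11, J12],[−J12*, J22]], R = [[R11, 0],[0, 0]] with R11 ∈ ℂ^{n1×n1} positive definite and blocks of sizes n1 + n2 = n. Then J − R is nonsingular if and only if rank([J12; J22]) = n2 (the stacked matrix [J12 over J22] has full column rank n2). -/
open Matrix
open scoped ComplexOrder

/-!
If `(J - R) v = 0` then `v* J v = v* R v`; the left side is purely imaginary since `J` is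
skew-Hermitian, the right side is real and nonnegative, so both vanish and `R v = 0`. As `R11` is
definite, the first block of `v` is zero, so the kernel of `J - R` consists exactly of the vectors
`(0, w)` with `[J12; J22] w = 0`.
-/

theorem Matrix.rank_eq_card_width_iff {m n K : Type*} [Field K] [Fintype n] (A : Matrix m n K) :
    A.rank = Fintype.card n ↔ ∀ v, A *ᵥ v = 0 → v = 0 := by
  have h := LinearMap.finrank_range_add_finrank_ker A.mulVecLin
  rw [Module.finrank_fintype_fun_eq_card] at h
  refine Iff.trans ?_ (LinearMap.ker_eq_bot' (f := A.mulVecLin))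
  rw [rank, ← Submodule.finrank_eq_zero]
  omega

theorem Matrix.PosSemidef.mulVec_eq_zero_of_skew_sub_mulVec_eq_zero {𝕜 n : Type*} [RCLike 𝕜]
    [Fintype n] {J R : Matrix n n 𝕜} (hJ : Jᴴ = -J) (hR : R.PosSemidef) {v : n → 𝕜}
    (hv : (J - R) *ᵥ v = 0) : R *ᵥ v = 0 := by
  have hJR : star v ⬝ᵥ J *ᵥ v = star v ⬝ᵥ R *ᵥ v := by
    rw [← sub_eq_zero, ← dotProduct_sub, ← sub_mulVec, hv, dotProduct_zero]
  have hskew : star (star v ⬝ᵥ J *ᵥ v) = -(star v ⬝ᵥ J *ᵥ v) := by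
    rw [← star_dotProduct, star_mulVec, ← dotProduct_mulVec, hJ, neg_mulVec, dotProduct_neg]
  have hself : star (star v ⬝ᵥ R *ᵥ v) = star v ⬝ᵥ R *ᵥ v :=
    (hR.dotProduct_mulVec_nonneg v).isSelfAdjoint
  rw [hJR, hself] at hskew
  exact (hR.dotProduct_mulVec_zero_iff v).mp (CharZero.eq_neg_self_iff.mp hskew)

theorem Matrix.fromBlocks_mulVec_sum_elim_zero {l m n o α : Type*} [Fintype l] [Fintype m]
    [Semiring α] (A : Matrix n l α) (B : Matrix n m α) (C : Matrix o l α)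
    (D : Matrix o m α) (w : m → α) :
    fromBlocks A B C D *ᵥ Sum.elim 0 w = fromRows B D *ᵥ w := by
  simp [fromBlocks_mulVec]

theorem stmt_1_general {n1 n2 : ℕ}
    (J11 R11 : Matrix (Fin n1) (Fin n1) ℂ)
    (J12 : Matrix (Fin n1) (Fin n2) ℂ)
    (J22 : Matrix (Fin n2) (Fin n2) ℂ)
    (hJ : (Matrix.fromBlocks J11 J12 (-J12ᴴ) J22)ᴴ = -(Matrix.fromBlocks J11 J12 (-J12ᴴ) J22))
    (hR : (Matrix.fromBlocks R11 0 0 (0 : Matrix (Fin n2) (Fin n2) ℂ)).PosSemidef)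
    (hR11 : R11.PosDef) :
    (Matrix.fromBlocks J11 J12 (-J12ᴴ) J22 -
        Matrix.fromBlocks R11 0 0 (0 : Matrix (Fin n2) (Fin n2) ℂ)).det ≠ 0
    ↔ (Matrix.fromRows J12 J22).rank = n2 := by
  have hmulVec_inr (w : Fin n2 → ℂ) :
      (fromBlocks J11 J12 (-J12ᴴ) J22 - fromBlocks R11 0 0 0) *ᵥ Sum.elim 0 w =
        fromRows J12 J22 *ᵥ w := by
    simp [sub_mulVec, fromBlocks_mulVec_sum_elim_zero]
  have hrank := rank_eq_card_width_iff (fromRows J12 J22)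
  rw [Fintype.card_fin] at hrank
  rw [hrank, Ne, ← exists_mulVec_eq_zero_iff, not_exists]
  constructor
  · intro h w hw
    by_contra hw0
    exact h (Sum.elim 0 w) ⟨fun h0 => hw0 (congrArg (· ∘ Sum.inr) h0), by rw [hmulVec_inr, hw]⟩
  · rintro h v ⟨hv0, hv⟩
    have hRv := hR.mulVec_eq_zero_of_skew_sub_mulVec_eq_zero hJ hv
    have hv1 : v ∘ Sum.inl = 0 := by
      refine mulVec_injective_iff_isUnit.mpr hR11.isUnit ?_
      simpa [fromBlocks_mulVec] using congrArg (· ∘ Sum.inl) hRv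
    have hv_eq : v = Sum.elim (0 : Fin n1 → ℂ) (v ∘ Sum.inr) := by
      rw [← hv1, Sum.elim_comp_inl_inr]
    rw [hv_eq, hmulVec_inr] at hv
    exact hv0 (by rw [hv_eq, h _ hv, Sum.elim_zero_zero])

/-- Chu–Mehrmann Lemma 3.3(i): J − R is nonsingular iff [J12; J22] has full column rank n2. -/
theorem stmt_1 {n1 n2 : ℕ}
    (E11 J11 R11 : Matrix (Fin n1) (Fin n1) ℂ)
    (E12 J12 : Matrix (Fin n1) (Fin n2) ℂ)
    (E22 J22 : Matrix (Fin n2) (Fin n2) ℂ)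
    (hE : (Matrix.fromBlocks E11 E12 E12ᴴ E22).PosSemidef)
    (hJ : (Matrix.fromBlocks J11 J12 (-J12ᴴ) J22)ᴴ = -(Matrix.fromBlocks J11 J12 (-J12ᴴ) J22))
    (hR : (Matrix.fromBlocks R11 0 0 (0 : Matrix (Fin n2) (Fin n2) ℂ)).PosSemidef)
    (hR11 : R11.PosDef) :
    (Matrix.fromBlocks J11 J12 (-J12ᴴ) J22 -
        Matrix.fromBlocks R11 0 0 (0 : Matrix (Fin n2) (Fin n2) ℂ)).det ≠ 0
    ↔ (Matrix.fromRows J12 J22).rank = n2 :=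
  stmt_1_general J11 R11 J12 J22 hJ hR hR11
end

section
/- Let E, J, R ∈ ℂ^{n×n} with E ≥ 0, J = −J*, R = [[R11,0],[0,0]] with R11 > 0 of size n1, partitioned conformally with n1 + n2 = n. Then the pair (E, J − R) is regular and asymptotically stable (all finite eigenvalues s with det(sE − (J−R)) = 0 satisfy Re(s) < 0) if and only if for all purely imaginary s ∈ ℂ (Re(s) = 0), rank([J12 − sE12; J22 − sE22]) = n2. -/
open Matrix
open scoped ComplexOrder

/-!
If `(s • E - (J - R)) x = 0` with `0 ≤ re s`, the real part of `x* (s • E - (J - R)) x` is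
`re s · x* E x + x* R x = 0`, a sum of two nonnegative terms. Hence `R x = 0`, which forces
`x = (0, v)` because `R11` is positive definite, and if `re s > 0` also `E x = 0`, so that `x`
is a kernel vector of the pencil at `s = 0` as well. Either way `v ≠ 0` lies in the kernel of
`[J12 - t E12; J22 - t E22]` for some imaginary `t`. Conversely a kernel vector `v` of that
matrix gives the kernel vector `(0, v)` of the pencil at `t`. Regularity follows from
stability at `s = 1`.
-/

namespace Matrix

theorem rank_eq_card_iff_forall_mulVec_eq_zero {m n K : Type*} [Fintype m] [Fintype n] [Field K]
    (A : Matrix m n K) : A.rank = Fintype.card n ↔ ∀ v, A *ᵥ v = 0 → v = 0 := by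
  rw [← ker_mulVecLin_eq_bot_iff, ← Submodule.finrank_eq_zero, rank,
    ← Module.finrank_fintype_fun_eq_card K, ← A.mulVecLin.finrank_range_add_finrank_ker]
  omega

theorem re_star_dotProduct_mulVec_self_eq_zero_of_conjTranspose_eq_neg {n : Type*} [Fintype n]
    {J : Matrix n n ℂ} (hJ : Jᴴ = -J) (x : n → ℂ) : (star x ⬝ᵥ J *ᵥ x).re = 0 := by
  have h : star (star x ⬝ᵥ J *ᵥ x) = star x ⬝ᵥ Jᴴ *ᵥ x := by
    rw [star_dotProduct, star_star, star_mulVec, dotProduct_mulVec]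
  rw [hJ, neg_mulVec, dotProduct_neg] at h
  have := congrArg Complex.re h
  simp only [Complex.star_def, Complex.conj_re, Complex.neg_re] at this
  linarith

theorem mulVec_eq_zero_of_pencil_mulVec_eq_zero {n : Type*} [Fintype n] {E J R : Matrix n n ℂ}
    (hE : E.PosSemidef) (hJ : Jᴴ = -J) (hR : R.PosSemidef) {s : ℂ} (hs : 0 ≤ s.re)
    {x : n → ℂ} (hx : (s • E - (J - R)) *ᵥ x = 0) :
    R *ᵥ x = 0 ∧ (0 < s.re → E *ᵥ x = 0) := by
  obtain ⟨he, he'⟩ := Complex.nonneg_iff.mp (hE.dotProduct_mulVec_nonneg x)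
  obtain ⟨hr, hr'⟩ := Complex.nonneg_iff.mp (hR.dotProduct_mulVec_nonneg x)
  have hsum : s.re * (star x ⬝ᵥ E *ᵥ x).re + (star x ⬝ᵥ R *ᵥ x).re = 0 := by
    have := congrArg (fun y => (star x ⬝ᵥ y).re) hx
    simpa [sub_mulVec, smul_mulVec, dotProduct_sub, Complex.mul_re, ← he',
      re_star_dotProduct_mulVec_self_eq_zero_of_conjTranspose_eq_neg hJ] using this
  have hEre : 0 ≤ s.re * (star x ⬝ᵥ E *ᵥ x).re := mul_nonneg hs he
  have hr0 : (star x ⬝ᵥ R *ᵥ x).re = 0 := by linarith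
  refine ⟨(hR.dotProduct_mulVec_zero_iff x).mp (Complex.ext hr0 hr'.symm),
    fun hs' => (hE.dotProduct_mulVec_zero_iff x).mp (Complex.ext ?_ he'.symm)⟩
  exact (mul_eq_zero.mp (by linarith)).resolve_left hs'.ne'

theorem smul_sub_mulVec_eq_of_mulVec_eq_zero {n : Type*} [Fintype n] {E A : Matrix n n ℂ}
    {x : n → ℂ} (hEx : E *ᵥ x = 0) (s t : ℂ) : (s • E - A) *ᵥ x = (t • E - A) *ᵥ x := by
  simp only [sub_mulVec, smul_mulVec, hEx, smul_zero]

section Blocks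

variable {l m : Type*} [Fintype l] [Fintype m]

theorem pencil_mulVec_sumElim_zero (E11 J11 R11 : Matrix l l ℂ) (E12 J12 : Matrix l m ℂ)
    (E21 J21 : Matrix m l ℂ) (E22 J22 : Matrix m m ℂ) (s : ℂ) (v : m → ℂ) :
    (s • fromBlocks E11 E12 E21 E22 - (fromBlocks J11 J12 J21 J22 - fromBlocks R11 0 0 0)) *ᵥ
        Sum.elim 0 v = -(fromRows (J12 - s • E12) (J22 - s • E22) *ᵥ v) := by
  ext (i | i) <;> simp [sub_mulVec, smul_mulVec, fromBlocks_mulVec, fromRows_mulVec]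

theorem fromBlocks_posSemidef_of_posDef [DecidableEq l] {R11 : Matrix l l ℂ}
    (hR11 : R11.PosDef) : (fromBlocks R11 0 0 (0 : Matrix m m ℂ)).PosSemidef := by
  have := hR11.isUnit.invertible
  simpa using (PosDef.fromBlocks₁₁ (0 : Matrix l m ℂ) (0 : Matrix m m ℂ) hR11).mpr
    (by simpa using PosSemidef.zero)

variable [DecidableEq l] [DecidableEq m] {E11 J11 R11 : Matrix l l ℂ} {E12 J12 : Matrix l m ℂ}
  {E21 J21 : Matrix m l ℂ} {E22 J22 : Matrix m m ℂ}

theorem det_pencil_eq_zero_of_fromRows_mulVec_eq_zero {s : ℂ} {v : m → ℂ} (hv0 : v ≠ 0)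
    (hv : fromRows (J12 - s • E12) (J22 - s • E22) *ᵥ v = 0) :
    (s • fromBlocks E11 E12 E21 E22 - (fromBlocks J11 J12 J21 J22 - fromBlocks R11 0 0 0)).det
      = 0 :=
  exists_mulVec_eq_zero_iff.mp ⟨Sum.elim 0 v, fun h => hv0 (congrArg (· ∘ Sum.inr) h),
    by rw [pencil_mulVec_sumElim_zero, hv, neg_zero]⟩

theorem exists_re_eq_zero_fromRows_mulVec_eq_zero_of_det_pencil_eq_zero
    (hE : (fromBlocks E11 E12 E21 E22).PosSemidef)
    (hJ : (fromBlocks J11 J12 J21 J22)ᴴ = -fromBlocks J11 J12 J21 J22) (hR11 : R11.PosDef)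
    {s : ℂ} (hs : 0 ≤ s.re)
    (hdet : (s • fromBlocks E11 E12 E21 E22 -
      (fromBlocks J11 J12 J21 J22 - fromBlocks R11 0 0 0)).det = 0) :
    ∃ t : ℂ, t.re = 0 ∧ ∃ v ≠ 0, fromRows (J12 - t • E12) (J22 - t • E22) *ᵥ v = 0 := by
  obtain ⟨x, hx0, hx⟩ := exists_mulVec_eq_zero_iff.mpr hdet
  obtain ⟨hRx, hEx⟩ := mulVec_eq_zero_of_pencil_mulVec_eq_zero hE hJ
    (fromBlocks_posSemidef_of_posDef hR11) hs hx
  have hx1 : x ∘ Sum.inl = 0 := by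
    have h : R11 *ᵥ (x ∘ Sum.inl) = R11 *ᵥ 0 := by
      ext i
      simpa [fromBlocks_mulVec] using congrFun hRx (Sum.inl i)
    exact mulVec_injective_iff_isUnit.mpr hR11.isUnit h
  set v := x ∘ Sum.inr
  have hxv : x = Sum.elim (0 : l → ℂ) v := by rw [← hx1]; exact (Sum.elim_comp_inl_inr x).symm
  have hv0 : v ≠ 0 := fun hv => hx0 (by rw [hxv, hv, Sum.elim_zero_zero])
  rw [hxv] at hEx
  rcases hs.eq_or_lt with hs0 | hs0
  · refine ⟨s, hs0.symm, v, hv0, ?_⟩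
    rwa [hxv, pencil_mulVec_sumElim_zero, neg_eq_zero] at hx
  · refine ⟨0, Complex.zero_re, v, hv0, ?_⟩
    rwa [hxv, smul_sub_mulVec_eq_of_mulVec_eq_zero (hEx hs0) s 0, pencil_mulVec_sumElim_zero,
      neg_eq_zero] at hx

end Blocks

end Matrix

/-- Chu–Mehrmann Lemma 3.3(ii): the pair (E, J − R) is regular and asymptotically stable iff
for all purely imaginary s, [J12 − sE12; J22 − sE22] has full column rank n2. -/
theorem stmt_2 {n1 n2 : ℕ}
    (E11 J11 R11 : Matrix (Fin n1) (Fin n1) ℂ)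
    (E12 J12 : Matrix (Fin n1) (Fin n2) ℂ)
    (E22 J22 : Matrix (Fin n2) (Fin n2) ℂ)
    (hE : (Matrix.fromBlocks E11 E12 E12ᴴ E22).PosSemidef)
    (hJ : (Matrix.fromBlocks J11 J12 (-J12ᴴ) J22)ᴴ = -(Matrix.fromBlocks J11 J12 (-J12ᴴ) J22))
    (hR11 : R11.PosDef) :
    ((∃ s : ℂ, (s • Matrix.fromBlocks E11 E12 E12ᴴ E22 -
          (Matrix.fromBlocks J11 J12 (-J12ᴴ) J22 -
            Matrix.fromBlocks R11 0 0 (0 : Matrix (Fin n2) (Fin n2) ℂ))).det ≠ 0) ∧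
      (∀ s : ℂ, (s • Matrix.fromBlocks E11 E12 E12ᴴ E22 -
          (Matrix.fromBlocks J11 J12 (-J12ᴴ) J22 -
            Matrix.fromBlocks R11 0 0 (0 : Matrix (Fin n2) (Fin n2) ℂ))).det = 0 → s.re < 0))
    ↔ (∀ s : ℂ, s.re = 0 →
        (Matrix.fromRows (J12 - s • E12) (J22 - s • E22)).rank = n2) := by
  constructor
  · rintro ⟨-, hstab⟩ s hs
    refine ((rank_eq_card_iff_forall_mulVec_eq_zero _).mpr fun v hv => ?_).trans
      (Fintype.card_fin n2)
    by_contra hv0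
    exact (hstab s (det_pencil_eq_zero_of_fromRows_mulVec_eq_zero hv0 hv)).ne hs
  · intro hrank
    have hstab : ∀ s : ℂ, (s • fromBlocks E11 E12 E12ᴴ E22 -
        (fromBlocks J11 J12 (-J12ᴴ) J22 - fromBlocks R11 0 0 0)).det = 0 → s.re < 0 := by
      intro s hdet
      by_contra! hs
      obtain ⟨t, ht, v, hv0, hv⟩ :=
        exists_re_eq_zero_fromRows_mulVec_eq_zero_of_det_pencil_eq_zero hE hJ hR11 hs hdet
      exact hv0 ((rank_eq_card_iff_forall_mulVec_eq_zero _).mp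
        ((hrank t ht).trans (Fintype.card_fin n2).symm) v hv)
    exact ⟨⟨1, fun hdet => (hstab 1 hdet).not_ge zero_le_one⟩, hstab⟩
end

section
/- Let R ∈ ℂ^{n×n} with R ≥ 0, B ∈ ℂ^{n×m}, and K ∈ ℂ^{m×m} with K > 0 (Hermitian positive definite). Then R + B K B* ≥ 0 and rank(R + B K B*) = rank([R, B]) = rank([R + B K B*, B]). -/
/-!
A sum of positive semidefinite matrices annihilates `x` iff each summand does, and since `K ≻ 0`,
`B K Bᴴ x = 0` iff `Bᴴ x = 0`. Hence `R + B K Bᴴ`, `[R; Bᴴ]` and `[R + B K Bᴴ; Bᴴ]` have the same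
kernel, so the same rank by rank–nullity; as `R` and `R + B K Bᴴ` are Hermitian, these stacked
matrices are the conjugate transposes of `[R, B]` and `[R + B K Bᴴ, B]`.
-/

open Matrix
open scoped ComplexOrder

namespace Matrix

lemma rank_eq_of_mulVec_eq_zero_iff {K : Type*} [Field K] {l m n : Type*} [Fintype n]
    {A : Matrix m n K} {C : Matrix l n K} (h : ∀ x, A *ᵥ x = 0 ↔ C *ᵥ x = 0) :
    A.rank = C.rank := by
  have hker : LinearMap.ker A.mulVecLin = LinearMap.ker C.mulVecLin := by
    ext x
    exact h x
  have hA := LinearMap.finrank_range_add_finrank_ker A.mulVecLin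
  have hC := LinearMap.finrank_range_add_finrank_ker C.mulVecLin
  rw [hker] at hA
  rw [rank, rank]
  omega

lemma fromRows_mulVec_eq_zero_iff {R : Type*} [Semiring R] {m₁ m₂ n : Type*} [Fintype n]
    (A₁ : Matrix m₁ n R) (A₂ : Matrix m₂ n R) (x : n → R) :
    fromRows A₁ A₂ *ᵥ x = 0 ↔ A₁ *ᵥ x = 0 ∧ A₂ *ᵥ x = 0 := by
  rw [fromRows_mulVec, ← Sum.elim_zero_zero, Sum.elim_eq_iff]

lemma IsHermitian.rank_fromCols_eq_rank_fromRows {R : Type*} [Field R] [PartialOrder R]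
    [StarRing R] [StarOrderedRing R] {n m : Type*} [Fintype n] [Fintype m]
    {A : Matrix n n R} (hA : A.IsHermitian) (B : Matrix n m R) :
    (fromCols A B).rank = (fromRows A Bᴴ).rank := by
  rw [← rank_conjTranspose, conjTranspose_fromCols_eq_fromRows_conjTranspose, hA.eq]

variable {𝕜 : Type*} [RCLike 𝕜] {n m : Type*} [Fintype n] [Fintype m]

lemma PosSemidef.add_mulVec_eq_zero_iff {A C : Matrix n n 𝕜} (hA : A.PosSemidef)
    (hC : C.PosSemidef) (x : n → 𝕜) :
    (A + C) *ᵥ x = 0 ↔ A *ᵥ x = 0 ∧ C *ᵥ x = 0 := by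
  rw [← (hA.add hC).dotProduct_mulVec_zero_iff, ← hA.dotProduct_mulVec_zero_iff,
    ← hC.dotProduct_mulVec_zero_iff, add_mulVec, dotProduct_add]
  exact add_eq_zero_iff_of_nonneg (hA.dotProduct_mulVec_nonneg x) (hC.dotProduct_mulVec_nonneg x)

lemma PosDef.mul_mul_conjTranspose_mulVec_eq_zero_iff {K : Matrix m m 𝕜} (hK : K.PosDef)
    (B : Matrix n m 𝕜) (x : n → 𝕜) :
    (B * K * Bᴴ) *ᵥ x = 0 ↔ Bᴴ *ᵥ x = 0 := by
  have hquad : star x ⬝ᵥ (B * K * Bᴴ) *ᵥ x = star (Bᴴ *ᵥ x) ⬝ᵥ K *ᵥ (Bᴴ *ᵥ x) := by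
    rw [← mulVec_mulVec, ← mulVec_mulVec, dotProduct_mulVec, star_mulVec,
      conjTranspose_conjTranspose]
  rw [← (hK.posSemidef.mul_mul_conjTranspose_same B).dotProduct_mulVec_zero_iff, hquad]
  refine ⟨fun h => ?_, fun h => by rw [h, mulVec_zero, dotProduct_zero]⟩
  by_contra hBx
  exact (hK.dotProduct_mulVec_pos hBx).ne' h

end Matrix

/-- For R ⪰ 0 and K ≻ 0: R + BKB* ⪰ 0 and
rank(R + BKB*) = rank [R, B] = rank [R + BKB*, B]. -/
theorem stmt_4 {n m : ℕ}
    (R : Matrix (Fin n) (Fin n) ℂ) (B : Matrix (Fin n) (Fin m) ℂ)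
    (K : Matrix (Fin m) (Fin m) ℂ)
    (hR : R.PosSemidef) (hK : K.PosDef) :
    (R + B * K * Bᴴ).PosSemidef ∧
    (R + B * K * Bᴴ).rank = (Matrix.fromCols R B).rank ∧
    (Matrix.fromCols R B).rank = (Matrix.fromCols (R + B * K * Bᴴ) B).rank := by
  have hBKB := hK.posSemidef.mul_mul_conjTranspose_same B
  have hS : (R + B * K * Bᴴ).PosSemidef := hR.add hBKB
  have hker : ∀ x, (R + B * K * Bᴴ) *ᵥ x = 0 ↔ R *ᵥ x = 0 ∧ Bᴴ *ᵥ x = 0 := fun x => by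
    rw [hR.add_mulVec_eq_zero_iff hBKB, hK.mul_mul_conjTranspose_mulVec_eq_zero_iff]
  refine ⟨hS, ?_, ?_⟩
  · rw [hR.isHermitian.rank_fromCols_eq_rank_fromRows]
    exact rank_eq_of_mulVec_eq_zero_iff fun x => by rw [hker, fromRows_mulVec_eq_zero_iff]
  · rw [hR.isHermitian.rank_fromCols_eq_rank_fromRows,
      hS.isHermitian.rank_fromCols_eq_rank_fromRows]
    exact rank_eq_of_mulVec_eq_zero_iff fun x => by
      rw [fromRows_mulVec_eq_zero_iff, fromRows_mulVec_eq_zero_iff, hker, and_self_right]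
end

section
/- Let E ∈ ℂ^{n×n}, B ∈ ℂ^{n×m}, C ∈ ℂ^{p×n}, and let r be a nonnegative integer. There exists G0 ∈ ℂ^{m×p} such that rank(E + B G0 C) = r if and only if rank([E, B]) + rank([E; C]) − rank([[E, B],[C, 0]]) ≤ r ≤ min{rank([E, B]), rank([E; C])}. -/
/-!
Write `f = E`, `U = range B` and `W = ker C`. The maps `B G C` are exactly the linear maps `h`
with `range h ≤ U` and `W ≤ ker h`, and adding such an `h` to `f` changes none of
`range f ⊔ U`, `ker f ⊓ W` and `W ⊓ f⁻¹(U)`, whose dimensions are what the three block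
ranks measure. For `A = f + h`, `rank A ≤ dim (range A ⊔ U)`,
`rank A + dim (ker A ⊓ W) ≤ n` and `dim (W ⊓ A⁻¹(U)) ≤ dim (ker A ⊓ W) + dim (range A ⊓ U)`;
these are the three bounds.
Conversely, while `rank A` lies strictly inside the bounds, a rank-one perturbation
`v ↦ l v • w` with `l` vanishing on `W` and `w ∈ U` raises or lowers it by one, so every value
in between is reached from `h = 0`.
-/

open Matrix Module Submodule LinearMap

section LinearAlgebra

variable {K V V' : Type*} [Field K] [AddCommGroup V] [Module K V] [AddCommGroup V'] [Module K V']

theorem Submodule.finrank_map_add_finrank_inf_ker [FiniteDimensional K V] (f : V →ₗ[K] V')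
    (p : Submodule K V) :
    finrank K (p.map f) + finrank K (p ⊓ ker f : Submodule K V) = finrank K p := by
  have h := finrank_range_add_finrank_ker (f.domRestrict p)
  rwa [range_domRestrict, ker_domRestrict, ← finrank_map_subtype_eq, map_comap_subtype] at h

theorem Submodule.exists_le_ker_and_eq_one {p : Submodule K V} {v : V} (hv : v ∉ p) :
    ∃ l : V →ₗ[K] K, p ≤ ker l ∧ l v = 1 := by
  obtain ⟨l, hl, hlv⟩ := exists_extend_of_notMem (0 : p →ₗ[K] K) hv 1
  exact ⟨l, fun x hx => by simpa using congr($hl ⟨x, hx⟩), hlv⟩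

theorem LinearMap.exists_comp_comp_eq_self (u : V →ₗ[K] V') :
    ∃ v : V' →ₗ[K] V, u ∘ₗ v ∘ₗ u = u := by
  obtain ⟨ρ, hρ⟩ := (range u).subtype.exists_leftInverse_of_injective (range u).ker_subtype
  obtain ⟨σ, hσ⟩ := u.rangeRestrict.exists_rightInverse_of_surjective u.range_rangeRestrict
  refine ⟨σ ∘ₗ ρ, ext fun x => ?_⟩
  have hρx : ρ (u x) = u.rangeRestrict x := congr($hρ (u.rangeRestrict x))
  simpa [hρx] using congr(((range u).subtype ∘ₗ $hσ) (u.rangeRestrict x))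

theorem LinearMap.finrank_ker_add_one_of_apply_eq_one [FiniteDimensional K V] {l : V →ₗ[K] K}
    {x : V} (hx : l x = 1) : finrank K (ker l) + 1 = finrank K V := by
  have hl : range l = ⊤ := range_eq_top.2 fun c => ⟨c • x, by simp [hx]⟩
  have := finrank_range_add_finrank_ker l
  rw [hl, finrank_top, finrank_self] at this
  omega

variable [FiniteDimensional K V] (A : V →ₗ[K] V') {U : Submodule K V'} {W : Submodule K V}

theorem LinearMap.finrank_comap_eq :
    finrank K (comap A U) = finrank K (range A ⊓ U : Submodule K V') + finrank K (ker A) := by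
  have h := finrank_map_add_finrank_inf_ker A (comap A U)
  rw [map_comap_eq, inf_of_le_right (ker_le_comap A)] at h
  exact h.symm

theorem LinearMap.finrank_inf_comap_sup_ker_add :
    finrank K (W ⊓ comap A U ⊔ ker A : Submodule K V) +
        finrank K (ker A ⊓ W : Submodule K V) =
      finrank K (W ⊓ comap A U : Submodule K V) + finrank K (ker A) := by
  have h := finrank_sup_add_finrank_inf_eq (W ⊓ comap A U) (ker A)
  rwa [inf_assoc, inf_of_le_right (ker_le_comap A), inf_comm W (ker A)] at h

theorem LinearMap.finrank_inf_comap_le :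
    finrank K (W ⊓ comap A U : Submodule K V) ≤
      finrank K (ker A ⊓ W : Submodule K V) + finrank K (range A ⊓ U : Submodule K V') := by
  have hle : finrank K (W ⊓ comap A U ⊔ ker A : Submodule K V) ≤ finrank K (comap A U) :=
    finrank_mono (sup_le inf_le_right (ker_le_comap A))
  have := A.finrank_comap_eq (U := U)
  have := A.finrank_inf_comap_sup_ker_add (U := U) (W := W)
  omega

theorem LinearMap.not_comap_le_sup_ker_of_finrank_lt
    (h : finrank K (W ⊓ comap A U : Submodule K V) <
      finrank K (ker A ⊓ W : Submodule K V) + finrank K (range A ⊓ U : Submodule K V')) :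
    ¬ comap A U ≤ W ⊔ ker A := by
  intro hle
  have hle' : finrank K (comap A U) ≤ finrank K (W ⊓ comap A U ⊔ ker A : Submodule K V) := by
    refine finrank_mono fun x hx => ?_
    rw [sup_comm, ← sup_inf_assoc_of_le W (ker_le_comap A), sup_comm]
    exact ⟨hle hx, hx⟩
  have := A.finrank_comap_eq (U := U)
  have := A.finrank_inf_comap_sup_ker_add (U := U) (W := W)
  omega

end LinearAlgebra

section BlockMaps

variable {K V W X Y : Type*} [Field K] [AddCommGroup V] [Module K V] [AddCommGroup W] [Module K W]
  [AddCommGroup X] [Module K X] [AddCommGroup Y] [Module K Y] [FiniteDimensional K V]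
  [FiniteDimensional K W]

/-- `(e.coprod b).prod (c ∘ₗ fst K V W)` is the block operator `[[e, b], [c, 0]]`. -/
theorem LinearMap.finrank_range_coprod_prod_add (e : V →ₗ[K] X) (b : W →ₗ[K] X)
    (c : V →ₗ[K] Y) :
    finrank K (range ((e.coprod b).prod (c ∘ₗ fst K V W))) +
        finrank K (ker c ⊓ comap e (range b) : Submodule K V) =
      finrank K V + finrank K (range b) := by
  set Ψ := (e.coprod b).prod (c ∘ₗ fst K V W)
  have hfst : map (fst K V W) (ker Ψ) = ker c ⊓ comap e (range b) := by
    ext x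
    simp only [Ψ, ker_prod, mem_map, mem_inf, mem_ker, coprod_apply, coe_comp, coe_fst,
      Function.comp_apply, fst_apply, Prod.exists, exists_and_right, exists_eq_right, mem_comap,
      mem_range]
    constructor
    · rintro ⟨⟨y, hy⟩, hx⟩
      exact ⟨hx, -y, by rw [map_neg, neg_eq_iff_add_eq_zero, add_comm, hy]⟩
    · rintro ⟨hx, y, hy⟩
      exact ⟨⟨-y, by rw [map_neg, ← hy, add_neg_cancel]⟩, hx⟩
  have hsnd : ker Ψ ⊓ ker (fst K V W) = map (inr K V W) (ker b) := by
    ext ⟨x, y⟩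
    simp only [Ψ, ker_prod, mem_inf, mem_ker, coprod_apply, coe_comp, coe_fst, Function.comp_apply,
      fst_apply, map_inr, mem_prod, mem_bot]
    constructor
    · rintro ⟨⟨hxy, -⟩, rfl⟩
      exact ⟨rfl, by simpa using hxy⟩
    · rintro ⟨rfl, hy⟩
      simpa using hy
  have hkerΨ := finrank_map_add_finrank_inf_ker (fst K V W) (ker Ψ)
  rw [hfst, hsnd, ← (equivMapOfInjective _ (inr_injective (R := K)) (ker b)).finrank_eq] at hkerΨ
  have hΨ := finrank_range_add_finrank_ker Ψ
  rw [finrank_prod] at hΨ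
  have hb := finrank_range_add_finrank_ker b
  omega

end BlockMaps

namespace Matrix

open LinearEquiv (sumArrowLequivProdArrow)

variable {K ι ι' κ κ' : Type*} [Field K] [Fintype κ] [Fintype κ']

theorem rank_fromCols (A₁ : Matrix ι κ K) (A₂ : Matrix ι κ' K) :
    (fromCols A₁ A₂).rank =
      finrank K (range A₁.mulVecLin ⊔ range A₂.mulVecLin : Submodule K (ι → K)) := by
  have : (fromCols A₁ A₂).mulVecLin =
      A₁.mulVecLin.coprod A₂.mulVecLin ∘ₗ
        (sumArrowLequivProdArrow κ κ' K K).toLinearMap :=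
    LinearMap.ext (fromCols_mulVec A₁ A₂)
  rw [rank, this, range_comp_of_range_eq_top _ (LinearEquiv.range _), range_coprod]

theorem rank_fromRows_add (A₁ : Matrix ι κ K) (A₂ : Matrix ι' κ K) :
    (fromRows A₁ A₂).rank +
        finrank K (ker A₁.mulVecLin ⊓ ker A₂.mulVecLin : Submodule K (κ → K)) =
      Fintype.card κ := by
  have : (fromRows A₁ A₂).mulVecLin =
      (sumArrowLequivProdArrow ι ι' K K).symm.toLinearMap ∘ₗ
        A₁.mulVecLin.prod A₂.mulVecLin :=
    LinearMap.ext (fromRows_mulVec A₁ A₂)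
  have hker : ker (fromRows A₁ A₂).mulVecLin = ker A₁.mulVecLin ⊓ ker A₂.mulVecLin := by
    rw [this, LinearEquiv.ker_comp, ker_prod]
  rw [rank, ← hker, finrank_range_add_finrank_ker, finrank_fintype_fun_eq_card]

theorem rank_fromBlocks_zero_add (E : Matrix ι κ K) (B : Matrix ι κ' K) (C : Matrix ι' κ K) :
    (fromBlocks E B C 0).rank +
        finrank K (ker C.mulVecLin ⊓ comap E.mulVecLin (range B.mulVecLin) :
          Submodule K (κ → K)) =
      Fintype.card κ + B.rank := by
  have : (fromBlocks E B C 0).mulVecLin =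
      (sumArrowLequivProdArrow ι ι' K K).symm.toLinearMap ∘ₗ
        (E.mulVecLin.coprod B.mulVecLin).prod (C.mulVecLin ∘ₗ fst K _ _) ∘ₗ
          (sumArrowLequivProdArrow κ κ' K K).toLinearMap :=
    LinearMap.ext fun v => by
      rw [mulVecLin_apply, fromBlocks_mulVec, zero_mulVec, add_zero]
      rfl
  rw [rank, rank, this, range_comp, range_comp_of_range_eq_top _ (LinearEquiv.range _),
    LinearEquiv.finrank_map_eq, finrank_range_coprod_prod_add, finrank_fintype_fun_eq_card]

end Matrix

theorem Nat.up_down_induction {S : ℕ → Prop} {a lo hi : ℕ} (ha : S a)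
    (up : ∀ s, S s → s < hi → S (s + 1)) (down : ∀ s, S (s + 1) → lo ≤ s → S s)
    {r : ℕ} (hlo : lo ≤ r) (hhi : r ≤ hi) : S r := by
  rcases le_total a r with har | hra
  · clear hlo
    induction r, har using Nat.le_induction with
    | base => exact ha
    | succ s _ ih => exact up s (ih (by omega)) hhi
  · clear hhi
    induction hra using Nat.decreasingInduction with
    | self => exact ha
    | of_succ s _ ih => exact down s (ih (by omega)) hlo

namespace OutputFeedback

section

variable {K V V' : Type*} [Field K] [AddCommGroup V] [Module K V] [AddCommGroup V'] [Module K V']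
  {U : Submodule K V'} {W : Submodule K V}

/-- With `U = range B` and `W = ker C` these are exactly the maps `B G C`
(`mem_admissible_range_ker_iff`). -/
def admissible (U : Submodule K V') (W : Submodule K V) : Submodule K (V →ₗ[K] V') where
  carrier := {h | range h ≤ U ∧ W ≤ ker h}
  add_mem' {g h} hg hh :=
    ⟨(range_add_le g h).trans (sup_le hg.1 hh.1), fun x hx => by
      simp [mem_ker.1 (hg.2 hx), mem_ker.1 (hh.2 hx)]⟩
  zero_mem' := by simp
  smul_mem' c h hh :=
    ⟨fun _ ⟨x, hx⟩ => hx ▸ U.smul_mem c (hh.1 ⟨x, rfl⟩), fun x hx => by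
      simp [mem_ker.1 (hh.2 hx)]⟩

theorem smulRight_mem_admissible {l : V →ₗ[K] K} {w : V'} (hl : W ≤ ker l) (hw : w ∈ U) :
    l.smulRight w ∈ admissible U W :=
  ⟨fun _ ⟨x, hx⟩ => hx ▸ U.smul_mem _ hw, fun x hx => by simp [mem_ker.1 (hl hx)]⟩

theorem mem_admissible_range_ker_iff {X Y : Type*} [AddCommGroup X] [Module K X]
    [AddCommGroup Y] [Module K Y] (b : X →ₗ[K] V') (c : V →ₗ[K] Y) (h : V →ₗ[K] V') :
    h ∈ admissible (range b) (ker c) ↔ ∃ g : Y →ₗ[K] X, b ∘ₗ g ∘ₗ c = h := by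
  constructor
  · rintro ⟨hb, hc⟩
    obtain ⟨b', hb'⟩ := b.exists_comp_comp_eq_self
    obtain ⟨c', hc'⟩ := c.exists_comp_comp_eq_self
    refine ⟨b' ∘ₗ h ∘ₗ c', ext fun x => ?_⟩
    have hcx : h (c' (c x)) = h x := by
      have : c' (c x) - x ∈ ker h := hc <| by
        rw [mem_ker, map_sub, sub_eq_zero]
        exact LinearMap.congr_fun hc' x
      rwa [mem_ker, map_sub, sub_eq_zero] at this
    obtain ⟨y, hy⟩ := hb ⟨x, rfl⟩
    simpa [hcx, ← hy] using congr($hb' y)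
  · rintro ⟨g, rfl⟩
    exact ⟨range_comp_le_range _ _, fun x hx => by simp [mem_ker.1 hx]⟩

variable (f : V →ₗ[K] V') {h : V →ₗ[K] V'}

theorem range_add_sup_eq (hh : h ∈ admissible U W) : range (f + h) ⊔ U = range f ⊔ U := by
  have key : ∀ g k : V →ₗ[K] V', range k ≤ U → range (g + k) ⊔ U ≤ range g ⊔ U :=
    fun g k hk => sup_le ((range_add_le g k).trans (sup_le_sup_left hk _)) le_sup_right
  refine le_antisymm (key f h hh.1) ?_
  simpa using key (f + h) (-h) (by rw [range_neg]; exact hh.1)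

theorem ker_add_inf_eq (hh : h ∈ admissible U W) : ker (f + h) ⊓ W = ker f ⊓ W := by
  ext x
  simp +contextual [mem_ker.1 (hh.2 _)]

theorem inf_comap_add_eq (hh : h ∈ admissible U W) : W ⊓ comap (f + h) U = W ⊓ comap f U := by
  ext x
  simp +contextual [mem_ker.1 (hh.2 _)]

theorem exists_finrank_range_add_eq_succ [FiniteDimensional K V'] (hU : ¬ U ≤ range f)
    (hW : ¬ ker f ≤ W) :
    ∃ δ ∈ admissible U W, finrank K (range (f + δ)) = finrank K (range f) + 1 := by
  obtain ⟨w, hwU, hwf⟩ := SetLike.not_le_iff_exists.1 hU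
  obtain ⟨x, hxf, hxW⟩ := SetLike.not_le_iff_exists.1 hW
  obtain ⟨l, hlW, hlx⟩ := exists_le_ker_and_eq_one hxW
  refine ⟨l.smulRight w, smulRight_mem_admissible hlW hwU, ?_⟩
  -- as `f x = 0` and `l x = 1`, `f + l.smulRight w` sends `v - l v • x` to `f v` and `x` to `w`
  have hrange : range (f + l.smulRight w) = range f ⊔ K ∙ w := by
    refine le_antisymm ?_ (sup_le ?_ ?_)
    · rintro _ ⟨v, rfl⟩
      exact add_mem (mem_sup_left ⟨v, rfl⟩)
        (mem_sup_right (smul_mem _ _ (mem_span_singleton_self w)))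
    · rintro _ ⟨v, rfl⟩
      exact ⟨v - l v • x, by simp [mem_ker.1 hxf, hlx]⟩
    · rw [span_singleton_le_iff_mem]
      exact ⟨x, by simp [mem_ker.1 hxf, hlx]⟩
  rw [hrange, finrank_sup_span_singleton hwf]

theorem exists_finrank_range_add_succ_eq [FiniteDimensional K V]
    (h : ¬ comap f U ≤ W ⊔ ker f) :
    ∃ δ ∈ admissible U W, finrank K (range (f + δ)) + 1 = finrank K (range f) := by
  obtain ⟨x, hxU, hx⟩ := SetLike.not_le_iff_exists.1 h
  obtain ⟨l, hl, hlx⟩ := exists_le_ker_and_eq_one hx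
  refine ⟨-l.smulRight (f x), neg_mem (smulRight_mem_admissible (le_sup_left.trans hl) hxU), ?_⟩
  -- `f - l.smulRight (f x) = f ∘ (1 - l.smulRight x)`, and `1 - l.smulRight x` is a projection
  -- onto `ker l`, which contains `ker f`
  have hrange : range (f - l.smulRight (f x)) = map f (ker l) := by
    refine le_antisymm ?_ ?_
    · rintro _ ⟨v, rfl⟩
      exact ⟨v - l v • x, by simp [hlx], by simp⟩
    · rintro _ ⟨v, hv, rfl⟩
      exact ⟨v, by simp [mem_ker.1 hv]⟩
  have hmap := finrank_map_add_finrank_inf_ker f (ker l)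
  rw [inf_of_le_right (le_sup_right.trans hl)] at hmap
  have := finrank_range_add_finrank_ker f
  have := finrank_ker_add_one_of_apply_eq_one hlx
  rw [← sub_eq_add_neg, hrange]
  omega

theorem exists_finrank_range_add_eq_iff [FiniteDimensional K V] [FiniteDimensional K V'] (r : ℕ) :
    (∃ h ∈ admissible U W, finrank K (range (f + h)) = r) ↔
      finrank K (range f ⊔ U : Submodule K V') + finrank K (W ⊓ comap f U : Submodule K V) ≤
          r + finrank K U + finrank K (ker f ⊓ W : Submodule K V) ∧
        r ≤ finrank K (range f ⊔ U : Submodule K V') ∧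
        r + finrank K (ker f ⊓ W : Submodule K V) ≤ finrank K V := by
  constructor
  · rintro ⟨h, hh, rfl⟩
    rw [← range_add_sup_eq f hh, ← inf_comap_add_eq f hh, ← ker_add_inf_eq f hh]
    have := finrank_sup_add_finrank_inf_eq (range (f + h)) U
    have := (f + h).finrank_inf_comap_le (U := U) (W := W)
    have := finrank_range_add_finrank_ker (f + h)
    have : finrank K (ker (f + h) ⊓ W : Submodule K V) ≤ finrank K (ker (f + h)) :=
      finrank_mono inf_le_left
    have : finrank K (range (f + h)) ≤ finrank K (range (f + h) ⊔ U : Submodule K V') :=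
      finrank_mono le_sup_left
    omega
  · rintro ⟨hlo, hP, hN⟩
    refine Nat.up_down_induction
      (S := fun s => ∃ h ∈ admissible U W, finrank K (range (f + h)) = s)
      ⟨0, zero_mem _, by rw [add_zero]⟩ ?_ ?_ (Nat.sub_le_of_le_add (Nat.sub_le_of_le_add hlo))
      (le_min hP (Nat.le_sub_of_add_le hN))
    · rintro s ⟨h, hh, rfl⟩ hs
      have hU : ¬ U ≤ range (f + h) := fun hle => by
        rw [← range_add_sup_eq f hh, sup_of_le_left hle] at hs
        omega
      have hW : ¬ ker (f + h) ≤ W := fun hle => by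
        rw [← ker_add_inf_eq f hh, inf_of_le_left hle] at hs
        have := finrank_range_add_finrank_ker (f + h)
        omega
      obtain ⟨δ, hδ, hrank⟩ := exists_finrank_range_add_eq_succ (f + h) hU hW
      exact ⟨h + δ, add_mem hh hδ, by rw [← add_assoc, hrank]⟩
    · rintro s ⟨h, hh, hs⟩ hlos
      have hsup := finrank_sup_add_finrank_inf_eq (range (f + h)) U
      rw [range_add_sup_eq f hh] at hsup
      have hlt : finrank K (W ⊓ comap (f + h) U : Submodule K V) <
          finrank K (ker (f + h) ⊓ W : Submodule K V) +
            finrank K (range (f + h) ⊓ U : Submodule K V') := by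
        rw [inf_comap_add_eq f hh, ker_add_inf_eq f hh]
        omega
      obtain ⟨δ, hδ, hrank⟩ :=
        exists_finrank_range_add_succ_eq (f + h) ((f + h).not_comap_le_sup_ker_of_finrank_lt hlt)
      exact ⟨h + δ, add_mem hh hδ, by rw [← add_assoc]; omega⟩

end

section Matrices

variable {K ι ι' κ κ' : Type*} [Field K] [Fintype ι'] [Fintype κ] [Fintype κ']
  [DecidableEq ι']

theorem exists_rank_add_mul_mul_eq_iff (E : Matrix ι κ K) (B : Matrix ι κ' K)
    (C : Matrix ι' κ K) (r : ℕ) :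
    (∃ G : Matrix κ' ι' K, (E + B * G * C).rank = r) ↔
      ∃ h ∈ admissible (range B.mulVecLin) (ker C.mulVecLin),
        finrank K (range (E.mulVecLin + h)) = r := by
  simp_rw [mem_admissible_range_ker_iff]
  constructor
  · rintro ⟨G, rfl⟩
    refine ⟨_, ⟨G.mulVecLin, rfl⟩, ?_⟩
    rw [Matrix.rank, Matrix.mulVecLin_add, Matrix.mulVecLin_mul, Matrix.mulVecLin_mul,
      LinearMap.comp_assoc]
  · rintro ⟨_, ⟨g, rfl⟩, rfl⟩
    have hg : (LinearMap.toMatrix' g).mulVecLin = g := by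
      rw [← Matrix.toLin'_apply', Matrix.toLin'_toMatrix']
    refine ⟨LinearMap.toMatrix' g, ?_⟩
    rw [Matrix.rank, Matrix.mulVecLin_add, Matrix.mulVecLin_mul, Matrix.mulVecLin_mul, hg,
      LinearMap.comp_assoc]

end Matrices

end OutputFeedback

/-- Rank assignability by output feedback: there exists G0 with rank(E + B G0 C) = r iff
rank[E,B] + rank[E;C] − rank[[E,B],[C,0]] ≤ r ≤ min{rank[E,B], rank[E;C]}. -/
theorem stmt_6 {n m p : ℕ}
    (E : Matrix (Fin n) (Fin n) ℂ) (B : Matrix (Fin n) (Fin m) ℂ)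
    (C : Matrix (Fin p) (Fin n) ℂ) (r : ℕ) :
    (∃ G0 : Matrix (Fin m) (Fin p) ℂ, (E + B * G0 * C).rank = r) ↔
    ((Matrix.fromCols E B).rank + (Matrix.fromRows E C).rank -
        (Matrix.fromBlocks E B C 0).rank ≤ r ∧
      r ≤ min (Matrix.fromCols E B).rank (Matrix.fromRows E C).rank) := by
  rw [OutputFeedback.exists_rank_add_mul_mul_eq_iff,
    OutputFeedback.exists_finrank_range_add_eq_iff, rank_fromCols, finrank_fin_fun, le_min_iff]
  have hrows := rank_fromRows_add E C
  have hblocks := rank_fromBlocks_zero_add E B C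
  have hB : B.rank = finrank ℂ (range B.mulVecLin) := rfl
  rw [Fintype.card_fin] at hrows hblocks
  omega
end

section
/- Let Q, E ∈ ℂ^{n×n} with Q nonsingular and Q*E = E*Q ≥ 0. If E and Q are partitioned conformally with E = [[Σ_E, 0],[0, 0]] where Σ_E ∈ ℂ^{r×r} is nonsingular, then Q has block lower-triangular form Q = [[Q11, 0],[Q21, Q22]] with Q11 ∈ ℂ^{r×r} nonsingular and Q22 ∈ ℂ^{(n−r)×(n−r)} nonsingular. -/
open Matrix
open scoped ComplexOrder

/-- If Q is nonsingular, Q*E = E*Q ⪰ 0 and E = [[Σ_E, 0],[0,0]] with Σ_E nonsingular,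
then Q is block lower triangular with nonsingular diagonal blocks. -/
theorem stmt_7 {r k : ℕ}
    (SigE : Matrix (Fin r) (Fin r) ℂ)
    (Q11 : Matrix (Fin r) (Fin r) ℂ) (Q12 : Matrix (Fin r) (Fin k) ℂ)
    (Q21 : Matrix (Fin k) (Fin r) ℂ) (Q22 : Matrix (Fin k) (Fin k) ℂ)
    (hSigE : SigE.det ≠ 0)
    (hQ : (Matrix.fromBlocks Q11 Q12 Q21 Q22).det ≠ 0)
    (hQE : ((Matrix.fromBlocks Q11 Q12 Q21 Q22)ᴴ *
        Matrix.fromBlocks SigE 0 0 (0 : Matrix (Fin k) (Fin k) ℂ)).PosSemidef) :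
    Q12 = 0 ∧ Q11.det ≠ 0 ∧ Q22.det ≠ 0 := by
  have hherm := hQE.1
  rw [Matrix.IsHermitian, Matrix.fromBlocks_conjTranspose, Matrix.fromBlocks_multiply] at hherm
  simp only [Matrix.mul_zero, Matrix.zero_mul, add_zero, zero_add] at hherm
  rw [Matrix.fromBlocks_conjTranspose, Matrix.fromBlocks_inj] at hherm
  simp only [Matrix.conjTranspose_zero] at hherm
  have h12 : Q12 = 0 := by
    have := hherm.2.2.1
    -- this : 0 = Q12ᴴ * SigE
    have h : Q12ᴴ * SigE = 0 := this.symm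
    have hinv : IsUnit SigE.det := isUnit_iff_ne_zero.mpr hSigE
    have : Q12ᴴ = 0 := by
      have := congrArg (· * SigE⁻¹) h
      simpa [Matrix.mul_assoc, Matrix.mul_nonsing_inv SigE hinv] using this
    calc Q12 = Q12ᴴᴴ := (Matrix.conjTranspose_conjTranspose Q12).symm
      _ = 0 := by rw [this, Matrix.conjTranspose_zero]
  subst h12
  rw [Matrix.det_fromBlocks_zero₁₂] at hQ
  exact ⟨rfl, left_ne_zero_of_mul hQ, right_ne_zero_of_mul hQ⟩
end

section
/- Let E, J, R ∈ ℂ^{n×n} be partitioned conformally into blocks of sizes n1, n2, n3 with E = [[Σ_E,0,0],[0,0,0],[0,0,0]] where Σ_E > 0, R replaced by R̃ = [[R̃11, R̃12, 0],[R̃12*, Σ̃_R, 0],[0,0,0]] with [[R̃11, R̃12],[R̃12*, Σ̃_R]] > 0, J = [[J̃11,J̃12,J̃13],[−J̃12*,J̃22,J̃23],[−J̃13*,J̃23*,J̃33]] skew-Hermitian. If the 2×2 bottom-right block matrix [[J̃22 − Σ̃_R, J̃23],[−J̃23*, J̃33]] is nonsingular, then rank([[E, 0],[J − R̃, E]]) =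 n + rank(E), i.e., the pair (E, J − R̃) is regular and impulse-free. -/
/-!
Write `E = diag(S, 0)` and order the unknowns of `[[E, 0], [A, E]]` as `(x₁, x₂, y₁, y₂)`.
The second block row (`[0 0 0 0]`) and the `y₂` column vanish; deleting them leaves the block
lower-triangular matrix `[[S, 0, 0], [A₁₁, S, A₁₂], [A₂₁, 0, A₂₂]]`, invertible as soon as `S`
and `A₂₂` are, so the rank is `2|n| + |m| = |n ⊕ m| + rank E`.
-/

open Matrix

section
variable {R : Type*} [CommRing R] [StrongRankCondition R]

theorem rank_fromBlocks_zero_zero_zero {l m p q : Type*} [Fintype l] [Fintype m] [Fintype q]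
    [DecidableEq l] [DecidableEq m] (B : Matrix l m R) :
    (fromBlocks B 0 0 (0 : Matrix p q R)).rank = B.rank := by
  have hfactor : fromBlocks B 0 0 (0 : Matrix p q R) =
      fromRows (1 : Matrix l l R) 0 * B * fromCols (1 : Matrix m m R) 0 := by
    ext (i | i) (j | j) <;> simp
  refine le_antisymm ?_ ?_
  · rw [hfactor]
    exact (rank_mul_le_left _ _).trans (rank_mul_le_right _ _)
  · exact rank_submatrix_le (fromBlocks B 0 0 (0 : Matrix p q R)) Sum.inl Sum.inl

variable {n m : Type*} [Fintype n] [Fintype m] [DecidableEq n] [DecidableEq m]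

theorem rank_fromBlocks_zero₁₂_eq_card_add_rank (S : Matrix n n R)
    (A : Matrix (n ⊕ m) (n ⊕ m) R) (hS : IsUnit S.det) (hA : IsUnit A.toBlocks₂₂.det) :
    (fromBlocks (fromBlocks S 0 0 (0 : Matrix m m R)) 0 A
        (fromBlocks S 0 0 (0 : Matrix m m R))).rank
      = Fintype.card (n ⊕ m) + (fromBlocks S 0 0 (0 : Matrix m m R)).rank := by
  let rows : (n ⊕ n ⊕ m) ⊕ m ≃ (n ⊕ m) ⊕ (n ⊕ m) :=
    { toFun := Sum.elim
        (Sum.elim (Sum.inl ∘ Sum.inl) (Sum.elim (Sum.inr ∘ Sum.inl) (Sum.inr ∘ Sum.inr)))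
        (Sum.inl ∘ Sum.inr)
      invFun := Sum.elim (Sum.elim (Sum.inl ∘ Sum.inl) Sum.inr) (Sum.inl ∘ Sum.inr)
      left_inv := by rintro ((i | i | i) | i) <;> rfl
      right_inv := by rintro ((i | i) | (i | i)) <;> rfl }
  let cols : (n ⊕ n ⊕ m) ⊕ m ≃ (n ⊕ m) ⊕ (n ⊕ m) :=
    { toFun := Sum.elim
        (Sum.elim (Sum.inl ∘ Sum.inl) (Sum.elim (Sum.inr ∘ Sum.inl) (Sum.inl ∘ Sum.inr)))
        (Sum.inr ∘ Sum.inr)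
      invFun := Sum.elim
        (Sum.elim (Sum.inl ∘ Sum.inl) (Sum.inl ∘ Sum.inr ∘ Sum.inr))
        (Sum.elim (Sum.inl ∘ Sum.inr ∘ Sum.inl) Sum.inr)
      left_inv := by rintro ((i | i | i) | i) <;> rfl
      right_inv := by rintro ((i | i) | (i | i)) <;> rfl }
  rw [← fromBlocks_toBlocks A]
  set E := fromBlocks S 0 0 (0 : Matrix m m R)
  set T : Matrix (n ⊕ n ⊕ m) (n ⊕ n ⊕ m) R :=
    fromBlocks S 0 (fromRows A.toBlocks₁₁ A.toBlocks₂₁)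
      (fromBlocks S A.toBlocks₁₂ 0 A.toBlocks₂₂)
  have hsub : (fromBlocks E 0 (fromBlocks A.toBlocks₁₁ A.toBlocks₁₂ A.toBlocks₂₁ A.toBlocks₂₂)
      E).submatrix rows cols = fromBlocks T 0 0 0 := by
    ext ((i | i | i) | i) ((j | j | j) | j) <;> simp [rows, cols, E, T]
  have hT : IsUnit T := by
    rw [isUnit_iff_isUnit_det, det_fromBlocks_zero₁₂, det_fromBlocks_zero₂₁]
    exact hS.mul (hS.mul hA)
  rw [← rank_submatrix _ rows cols, hsub, rank_fromBlocks_zero_zero_zero,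
    rank_fromBlocks_zero_zero_zero, rank_of_isUnit T hT,
    rank_of_isUnit S ((isUnit_iff_isUnit_det S).2 hS)]
  simp only [Fintype.card_sum]
  omega
end

open scoped ComplexOrder

theorem stmt_16_general {n1 n2 n3 : ℕ}
    (SigE R11 J11 : Matrix (Fin n1) (Fin n1) ℂ)
    (R12 J12 : Matrix (Fin n1) (Fin n2) ℂ)
    (J13 : Matrix (Fin n1) (Fin n3) ℂ)
    (SigR J22 : Matrix (Fin n2) (Fin n2) ℂ)
    (J23 : Matrix (Fin n2) (Fin n3) ℂ)
    (J33 : Matrix (Fin n3) (Fin n3) ℂ)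
    (hSigE : SigE.PosDef)
    (hns : (Matrix.fromBlocks (J22 - SigR) J23 (-J23ᴴ) J33).det ≠ 0) :
    (Matrix.fromBlocks
        (Matrix.fromBlocks SigE 0 0 (0 : Matrix (Fin n2 ⊕ Fin n3) (Fin n2 ⊕ Fin n3) ℂ))
        0
        (Matrix.fromBlocks J11 (Matrix.fromCols J12 J13)
            (Matrix.fromRows (-J12ᴴ) (-J13ᴴ)) (Matrix.fromBlocks J22 J23 (-J23ᴴ) J33) -
          Matrix.fromBlocks R11 (Matrix.fromCols R12 0)
            (Matrix.fromRows R12ᴴ 0) (Matrix.fromBlocks SigR 0 0 0))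
        (Matrix.fromBlocks SigE 0 0 (0 : Matrix (Fin n2 ⊕ Fin n3) (Fin n2 ⊕ Fin n3) ℂ))).rank
      = (n1 + n2 + n3) +
        (Matrix.fromBlocks SigE 0 0
          (0 : Matrix (Fin n2 ⊕ Fin n3) (Fin n2 ⊕ Fin n3) ℂ)).rank := by
  rw [rank_fromBlocks_zero₁₂_eq_card_add_rank SigE _
    ((isUnit_iff_isUnit_det SigE).1 hSigE.isUnit)]
  · simp only [Fintype.card_sum, Fintype.card_fin, add_assoc]
  · refine isUnit_iff_ne_zero.2 (ne_of_eq_of_ne (congrArg det ?_) hns)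
    ext (i | i) (j | j) <;> simp [toBlocks₂₂]

/-- If the lower-right (n2+n3)×(n2+n3) block [[J22 − Σ_R, J23],[−J23*, J33]] is nonsingular,
then the pair (E, J − R̃) satisfies Dai's impulse-free rank criterion. -/
theorem stmt_16 {n1 n2 n3 : ℕ}
    (SigE R11 J11 : Matrix (Fin n1) (Fin n1) ℂ)
    (R12 J12 : Matrix (Fin n1) (Fin n2) ℂ)
    (J13 : Matrix (Fin n1) (Fin n3) ℂ)
    (SigR J22 : Matrix (Fin n2) (Fin n2) ℂ)
    (J23 : Matrix (Fin n2) (Fin n3) ℂ)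
    (J33 : Matrix (Fin n3) (Fin n3) ℂ)
    (hSigE : SigE.PosDef)
    (hRpd : (Matrix.fromBlocks R11 R12 R12ᴴ SigR).PosDef)
    (hJ : (Matrix.fromBlocks J11 (Matrix.fromCols J12 J13)
        (Matrix.fromRows (-J12ᴴ) (-J13ᴴ)) (Matrix.fromBlocks J22 J23 (-J23ᴴ) J33))ᴴ =
      -(Matrix.fromBlocks J11 (Matrix.fromCols J12 J13)
        (Matrix.fromRows (-J12ᴴ) (-J13ᴴ)) (Matrix.fromBlocks J22 J23 (-J23ᴴ) J33)))
    (hns : (Matrix.fromBlocks (J22 - SigR) J23 (-J23ᴴ) J33).det ≠ 0) :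
    (Matrix.fromBlocks
        (Matrix.fromBlocks SigE 0 0 (0 : Matrix (Fin n2 ⊕ Fin n3) (Fin n2 ⊕ Fin n3) ℂ))
        0
        (Matrix.fromBlocks J11 (Matrix.fromCols J12 J13)
            (Matrix.fromRows (-J12ᴴ) (-J13ᴴ)) (Matrix.fromBlocks J22 J23 (-J23ᴴ) J33) -
          Matrix.fromBlocks R11 (Matrix.fromCols R12 0)
            (Matrix.fromRows R12ᴴ 0) (Matrix.fromBlocks SigR 0 0 0))
        (Matrix.fromBlocks SigE 0 0 (0 : Matrix (Fin n2 ⊕ Fin n3) (Fin n2 ⊕ Fin n3) ℂ))).rank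
      = (n1 + n2 + n3) +
        (Matrix.fromBlocks SigE 0 0
          (0 : Matrix (Fin n2 ⊕ Fin n3) (Fin n2 ⊕ Fin n3) ℂ)).rank :=
  stmt_16_general SigE R11 J11 R12 J12 J13 SigR J22 J23 J33 hSigE hns
end

section
/- Let J22, J23, J33, Σ_R, G2 be complex matrices with J22 skew-Hermitian of size n2, J33 skew-Hermitian of size n3, Σ_R Hermitian positive definite of size n2. If rank([[J22 − Σ_R, J23],[−J23*, J33],[G2*, 0]]) = n2 + n3 (full column rank) then rank([J23; J33]) = n3. -/
/-! The last `n3` columns of the augmented matrix form the block column `[J23; J33; 0]`.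
Columns of a matrix of full column rank are linearly independent, so these columns are, and
deleting the zero rows does not change the kernel. -/

open Matrix
open scoped ComplexOrder

namespace Matrix

variable {l m n₁ n₂ n K : Type*} [Field K]

theorem rank_eq_card_width_iff_mulVec_injective [Fintype n] (A : Matrix m n K) :
    A.rank = Fintype.card n ↔ Function.Injective A.mulVec := by
  rw [mulVec_injective_iff, linearIndependent_iff_card_eq_finrank_span,
    rank_eq_finrank_span_cols, Set.finrank, eq_comm]

theorem mulVec_injective_of_fromCols [Fintype n₁] [Fintype n₂] {A : Matrix m n₁ K}
    {B : Matrix m n₂ K} (h : Function.Injective (fromCols A B).mulVec) :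
    Function.Injective B.mulVec := by
  intro v w hvw
  have : fromCols A B *ᵥ Sum.elim 0 v = fromCols A B *ᵥ Sum.elim 0 w := by
    simp only [fromCols_mulVec_sumElim, hvw]
  exact Sum.elim_injective' (h this)

theorem mulVec_injective_of_ker_le [Fintype n] {A : Matrix m n K} {B : Matrix l n K}
    (hB : Function.Injective B.mulVec) (h : ∀ v, A *ᵥ v = 0 → B *ᵥ v = 0) :
    Function.Injective A.mulVec := by
  intro v w hvw
  apply hB
  have := h (v - w) (by rw [mulVec_sub, hvw, sub_self])
  rwa [mulVec_sub, sub_eq_zero] at this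

end Matrix

theorem stmt_17_general {n2 n3 m : ℕ}
    (J22 SigR : Matrix (Fin n2) (Fin n2) ℂ)
    (J23 : Matrix (Fin n2) (Fin n3) ℂ)
    (J33 : Matrix (Fin n3) (Fin n3) ℂ)
    (G2 : Matrix (Fin n2) (Fin m) ℂ)
    (hrank : (Matrix.fromRows (Matrix.fromCols (J22 - SigR) J23)
        (Matrix.fromRows (Matrix.fromCols (-J23ᴴ) J33)
          (Matrix.fromCols G2ᴴ (0 : Matrix (Fin m) (Fin n3) ℂ)))).rank = n2 + n3) :
    (Matrix.fromRows J23 J33).rank = n3 := by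
  -- regroup into the block columns `[J22 - SigR; -J23ᴴ; G2ᴴ]` and `[J23; J33; 0]`
  simp only [fromRows_fromCols_eq_fromBlocks, ← fromCols_fromRows_eq_fromBlocks] at hrank
  have hcols := mulVec_injective_of_fromCols <|
    (rank_eq_card_width_iff_mulVec_injective _).1 (hrank.trans (by simp))
  have hker : ∀ v, fromRows J23 J33 *ᵥ v = 0 →
      fromRows J23 (fromRows J33 (0 : Matrix (Fin m) (Fin n3) ℂ)) *ᵥ v = 0 := by
    intro v hv
    rw [fromRows_mulVec] at hv
    have h23 : J23 *ᵥ v = 0 := funext fun i => congrFun hv (Sum.inl i)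
    have h33 : J33 *ᵥ v = 0 := funext fun i => congrFun hv (Sum.inr i)
    rw [fromRows_mulVec, fromRows_mulVec, h23, h33, zero_mulVec, Sum.elim_zero_zero,
      Sum.elim_zero_zero]
  exact ((rank_eq_card_width_iff_mulVec_injective _).2
    (mulVec_injective_of_ker_le hcols hker)).trans (Fintype.card_fin n3)

/-- Full column rank of the augmented matrix [[J22 − Σ_R, J23],[−J23*, J33],[G2*, 0]]
forces [J23; J33] to have full column rank n3. -/
theorem stmt_17 {n2 n3 m : ℕ}
    (J22 SigR : Matrix (Fin n2) (Fin n2) ℂ)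
    (J23 : Matrix (Fin n2) (Fin n3) ℂ)
    (J33 : Matrix (Fin n3) (Fin n3) ℂ)
    (G2 : Matrix (Fin n2) (Fin m) ℂ)
    (hJ22 : J22ᴴ = -J22) (hJ33 : J33ᴴ = -J33) (hSigR : SigR.PosDef)
    (hrank : (Matrix.fromRows (Matrix.fromCols (J22 - SigR) J23)
        (Matrix.fromRows (Matrix.fromCols (-J23ᴴ) J33)
          (Matrix.fromCols G2ᴴ (0 : Matrix (Fin m) (Fin n3) ℂ)))).rank = n2 + n3) :
    (Matrix.fromRows J23 J33).rank = n3 :=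
  stmt_17_general J22 SigR J23 J33 G2 hrank
end

section
/- Let E, A ∈ ℂ^{n×n}, B ∈ ℂ^{n×m}, C ∈ ℂ^{m×n}, K ∈ ℂ^{m×m}. If the pair (E, A − BKC) is regular and impulse-free, then rank([[E, A],[0, E],[0, C]]) = n + rank(E). -/
/-!
If `E x = 0` and `M x = E y`, the pencil `X E - M` sends the vector `u = X x + y` to a constant
vector. Replacing a column `i` of the pencil with `x i ≠ 0` by this constant vector multiplies the
determinant by the linear polynomial `u i`, and yields a pencil whose leading matrix has rank at
most `rank E`. Since the determinant of a pencil has degree at most the rank of its leading matrix,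
`deg det (X E - M) = rank E` together with regularity forces `x = 0`.

For `M = A - B K C` this says that the kernel of `[[E, A], [0, E], [0, C]]` consists of the vectors
`(x, 0)` with `E x = 0`, and rank–nullity gives the rank `n + rank E`.
-/

open Matrix Polynomial

namespace Matrix

section Pencil

variable {ι K : Type*} [Fintype ι]

theorem natDegree_det_le_sum_of_natDegree_le [DecidableEq ι] {R : Type*} [CommRing R]
    (A : Matrix ι ι R[X]) (d : ι → ℕ) (h : ∀ i j, (A i j).natDegree ≤ d j) :
    A.det.natDegree ≤ ∑ j, d j := by
  rw [det_apply']
  refine natDegree_sum_le_of_forall_le _ _ fun σ _ => natDegree_mul_le.trans ?_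
  rw [natDegree_intCast, zero_add]
  exact (natDegree_prod_le _ _).trans (Finset.sum_le_sum fun j _ => h _ j)

variable [Field K]

noncomputable def pencil (E M : Matrix ι ι K) : Matrix ι ι K[X] :=
  (X : K[X]) • E.map C - M.map C

theorem map_mul_pencil_mul (V U E M : Matrix ι ι K) :
    V.map C * pencil E M * U.map C = pencil (V * E * U) (V * M * U) := by
  simp only [pencil, Matrix.mul_sub, Matrix.sub_mul, Matrix.map_mul, Matrix.mul_smul,
    Matrix.smul_mul]

variable [DecidableEq ι]

theorem natDegree_det_pencil_le_rank (E M : Matrix ι ι K) :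
    (pencil E M).det.natDegree ≤ E.rank := by
  obtain ⟨V, U, e, hV, hU, hD⟩ := exists_rank_normal_form E
  have hVU : V.det * U.det ≠ 0 :=
    mul_ne_zero ((isUnit_iff_isUnit_det V).1 hV).ne_zero ((isUnit_iff_isUnit_det U).1 hU).ne_zero
  have hdet : (pencil (V * E * U) (V * M * U)).det = C (V.det * U.det) * (pencil E M).det := by
    rw [← map_mul_pencil_mul, det_mul, det_mul, C_mul, RingHom.map_det, RingHom.map_det,
      RingHom.mapMatrix_apply, RingHom.mapMatrix_apply]
    ring
  rw [← natDegree_C_mul hVU, ← hdet, hD]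
  -- in normal form, only the first `E.rank` columns of the pencil involve `X`
  calc _ ≤ ∑ j, Sum.elim (fun _ => 1) (fun _ => 0) (e j) :=
        natDegree_det_le_sum_of_natDegree_le _ _ fun i j => ?_
    _ = E.rank := by rw [e.sum_comp]; simp
  simp only [pencil, sub_apply, smul_apply, map_apply, submatrix_apply, smul_eq_mul]
  rcases e j with j' | j'
  · simp only [Sum.elim_inl]
    compute_degree
  · rcases e i with i' | i' <;> simp

theorem rank_updateCol_zero_le (E : Matrix ι ι K) (i : ι) :
    (E.updateCol i 0).rank ≤ E.rank := by
  have : E.updateCol i 0 = E * diagonal fun j => if j = i then 0 else 1 := by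
    ext k j
    rcases eq_or_ne j i with rfl | hj
    · simp
    · simp [hj]
  rw [this]
  exact rank_mul_le_left _ _

omit [DecidableEq ι] in
theorem pencil_mulVec_C_mul_X_add_C (E M : Matrix ι ι K) (x y : ι → K) :
    pencil E M *ᵥ (fun j => C (x j) * X + C (y j)) =
      fun k => C ((E *ᵥ x) k) * X ^ 2 + C ((E *ᵥ y - M *ᵥ x) k) * X - C ((M *ᵥ y) k) := by
  funext k
  simp only [pencil, mulVec, dotProduct, sub_apply, smul_apply, map_apply, smul_eq_mul,
    Pi.sub_apply, map_sum, map_mul, map_sub, sub_mul, Finset.sum_mul, ← Finset.sum_sub_distrib,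
    ← Finset.sum_add_distrib]
  exact Finset.sum_congr rfl fun j _ => by ring

theorem eq_zero_of_natDegree_det_pencil_eq_rank {E M : Matrix ι ι K}
    (hreg : (pencil E M).det ≠ 0) (himp : (pencil E M).det.natDegree = E.rank)
    {x y : ι → K} (hx : E *ᵥ x = 0) (hxy : M *ᵥ x = E *ᵥ y) : x = 0 := by
  by_contra hne
  obtain ⟨i, hi⟩ : ∃ i, x i ≠ 0 := Function.ne_iff.mp hne
  set u : ι → K[X] := fun j => C (x j) * X + C (y j)
  have hu : pencil E M *ᵥ u = fun k => -C ((M *ᵥ y) k) := by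
    simp [u, pencil_mulVec_C_mul_X_add_C, hx, hxy]
  have hupdate : (pencil E M).updateCol i (pencil E M *ᵥ u) =
      pencil (E.updateCol i 0) (M.updateCol i (M *ᵥ y)) := by
    refine Matrix.ext fun k j => ?_
    rcases eq_or_ne j i with rfl | hj
    · rw [updateCol_self, hu]
      simp [pencil]
    · simp [pencil, updateCol_ne hj]
  have hdet :
      (pencil (E.updateCol i 0) (M.updateCol i (M *ᵥ y))).det = u i * (pencil E M).det := by
    have hcomb : pencil E M *ᵥ u = fun k => ∑ j, u j • pencil E M k j := by
      funext k
      simp only [mulVec, dotProduct, smul_eq_mul, mul_comm]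
    rw [← hupdate, hcomb, det_updateCol_sum, smul_eq_mul]
  have hle := (natDegree_det_pencil_le_rank _ (M.updateCol i (M *ᵥ y))).trans
    (rank_updateCol_zero_le E i)
  have hui : (u i).natDegree = 1 := natDegree_linear hi
  rw [hdet, natDegree_mul (ne_zero_of_natDegree_gt (hui ▸ zero_lt_one)) hreg, hui, himp] at hle
  omega

end Pencil

section Kernel

variable {m n o p K : Type*} [Fintype n] [Fintype o] [Field K]

theorem rank_add_finrank_ker (A : Matrix m n K) :
    A.rank + Module.finrank K (LinearMap.ker A.mulVecLin) = Fintype.card n := by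
  rw [rank, LinearMap.finrank_range_add_finrank_ker, Module.finrank_fintype_fun_eq_card]

theorem rank_eq_card_add_rank_of_ker_eq_map_inl {A : Matrix m (n ⊕ o) K} {E : Matrix p n K}
    (h : LinearMap.ker A.mulVecLin = (LinearMap.ker E.mulVecLin).map
      ((LinearEquiv.sumArrowLequivProdArrow n o K K).symm.toLinearMap ∘ₗ LinearMap.inl K _ _)) :
    A.rank = Fintype.card o + E.rank := by
  have hker : Module.finrank K (LinearMap.ker A.mulVecLin) =
      Module.finrank K (LinearMap.ker E.mulVecLin) := by
    rw [h]
    have hinj : Function.Injective ((LinearEquiv.sumArrowLequivProdArrow n o K K).symm.toLinearMap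
        ∘ₗ LinearMap.inl K _ _) := by
      rw [LinearMap.coe_comp]
      exact (LinearEquiv.injective _).comp LinearMap.inl_injective
    exact (Submodule.equivMapOfInjective _ hinj _).finrank_eq.symm
  have hA := rank_add_finrank_ker A
  have hE := rank_add_finrank_ker E
  rw [Fintype.card_sum] at hA
  omega

theorem ker_mulVecLin_fromRows_fromBlocks [Fintype m] (E A : Matrix n n K) (F : Matrix n m K)
    (C : Matrix m n K) (hW : ∀ x y, E *ᵥ x = 0 → (A - F * C) *ᵥ x = E *ᵥ y → x = 0) :
    LinearMap.ker (fromRows (fromBlocks E A 0 E) (fromCols (0 : Matrix m n K) C)).mulVecLin =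
      (LinearMap.ker E.mulVecLin).map
        ((LinearEquiv.sumArrowLequivProdArrow n n K K).symm.toLinearMap ∘ₗ
          LinearMap.inl K _ _) := by
  ext v
  rw [← Sum.elim_comp_inl_inr v]
  generalize v ∘ Sum.inl = a, v ∘ Sum.inr = b
  simp only [LinearMap.mem_ker, mulVecLin_apply, Submodule.mem_map, fromRows_mulVec,
    fromBlocks_mulVec, fromCols_mulVec_sumElim, Sum.elim_comp_inl, Sum.elim_comp_inr,
    zero_mulVec, zero_add, LinearMap.coe_comp, Function.comp_apply, LinearMap.inl_apply,
    LinearEquiv.coe_coe]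
  change _ ↔ ∃ y, E *ᵥ y = 0 ∧ Sum.elim y 0 = Sum.elim a b
  simp only [← Sum.elim_zero_zero, Sum.elim_eq_iff]
  constructor
  · rintro ⟨⟨hab, hb⟩, hCb⟩
    obtain rfl : b = 0 := hW b (-a) hb <| by
      rw [sub_mulVec, ← mulVec_mulVec, hCb, mulVec_zero, sub_zero, mulVec_neg,
        eq_neg_iff_add_eq_zero, add_comm, hab]
    exact ⟨a, by simpa using hab, rfl, rfl⟩
  · rintro ⟨a, ha, rfl, rfl⟩
    simp [ha]

end Kernel

end Matrix

/-- If the pair (E, A − BKC) is regular and impulse-free, then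
rank [[E, A],[0, E],[0, C]] = n + rank E. -/
theorem stmt_18 {n m : ℕ}
    (E A : Matrix (Fin n) (Fin n) ℂ)
    (B : Matrix (Fin n) (Fin m) ℂ) (C : Matrix (Fin m) (Fin n) ℂ)
    (K : Matrix (Fin m) (Fin m) ℂ)
    (hreg : Matrix.det ((Polynomial.X : Polynomial ℂ) • E.map Polynomial.C -
        (A - B * K * C).map Polynomial.C) ≠ 0)
    (himp : (Matrix.det ((Polynomial.X : Polynomial ℂ) • E.map Polynomial.C -
        (A - B * K * C).map Polynomial.C)).natDegree = E.rank) :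
    (Matrix.fromRows (Matrix.fromBlocks E A 0 E)
        (Matrix.fromCols (0 : Matrix (Fin m) (Fin n) ℂ) C)).rank = n + E.rank := by
  have hker := ker_mulVecLin_fromRows_fromBlocks E A (B * K) C
    fun _ _ => eq_zero_of_natDegree_det_pencil_eq_rank hreg himp
  rw [rank_eq_card_add_rank_of_ker_eq_map_inl hker, Fintype.card_fin]
end

section
/- Let E ∈ ℂ^{n×n} be Hermitian positive semidefinite of the block form E = [[E11, E12, E13],[E12*, E22, E23],[E13*, E23*, E33]], B = [[Σ_G],[0],[0]] with Σ_G positive definite of size n1 (partition sizes n1, n2, n3), and suppose for all purely imaginary s that rank([sE − (J−R), B]) = n where J is skew-Hermitian and R = [[R11, R12, 0],[R12*, Σ_R, 0],[0,0,0]] conformally partitioned. Then for all s with Re(s) = 0, rank([sE13 − J13; sE23 − J23; sE33 − J33]) = n3. -/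
/-!
Let `K = sE - J`, which is skew-Hermitian for purely imaginary `s`, and let `v = (0, 0, x)` with
`x` in the kernel of the third block column of `K`. Then `K v = 0`, hence also `vᴴ K = 0`; since
the third block rows of `R` and `B` vanish, `vᴴ R = 0` and `vᴴ B = 0`. So `vᴴ [K + R, B] = 0`,
and full row rank of `[K + R, B] = [sE - (J - R), B]` forces `v = 0`.
-/

open Matrix
open scoped ComplexOrder

lemma Complex.mem_skewAdjoint_of_re_eq_zero {s : ℂ} (hs : s.re = 0) : s ∈ skewAdjoint ℂ := by
  rw [skewAdjoint.mem_iff]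
  apply Complex.ext <;> simp [hs]

namespace Matrix

variable {m n p 𝕜 : Type*} [Fintype m] [Fintype n] [Fintype p] [Field 𝕜]

theorem linearIndependent_row_of_rank_eq_card {A : Matrix m n 𝕜} (h : A.rank = Fintype.card m) :
    LinearIndependent 𝕜 A.row := by
  rw [linearIndependent_iff_card_eq_finrank_span, Set.finrank, ← rank_eq_finrank_span_row, h]

theorem rank_eq_card_of_mulVec_eq_zero {A : Matrix m n 𝕜}
    (h : ∀ v, A *ᵥ v = 0 → v = 0) : A.rank = Fintype.card n := by
  rw [← rank_transpose]
  apply LinearIndependent.rank_matrix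
  rw [row_transpose, ← mulVec_injective_iff]
  exact LinearMap.ker_eq_bot.mp (ker_mulVecLin_eq_bot_iff.mpr h)

variable [StarRing 𝕜]

theorem star_vecMul_eq_zero_of_mem_skewAdjoint {K : Matrix m m 𝕜} (hK : K ∈ skewAdjoint _)
    {v : m → 𝕜} (hv : K *ᵥ v = 0) : star v ᵥ* K = 0 := by
  rw [skewAdjoint.mem_iff, star_eq_conjTranspose] at hK
  rw [← neg_neg K, ← hK, vecMul_neg, ← star_mulVec, hv, star_zero, neg_zero]

theorem eq_zero_of_mulVec_eq_zero_of_rank_fromCols_add {K R : Matrix m m 𝕜} {B : Matrix m p 𝕜}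
    (hK : K ∈ skewAdjoint _) (hrank : (fromCols (K + R) B).rank = Fintype.card m) {v : m → 𝕜}
    (hKv : K *ᵥ v = 0) (hRv : star v ᵥ* R = 0) (hBv : star v ᵥ* B = 0) : v = 0 := by
  have hinj := vecMul_injective_iff.mpr (linearIndependent_row_of_rank_eq_card hrank)
  have hzero : star v ᵥ* fromCols (K + R) B = 0 := by
    rw [vecMul_fromCols, vecMul_add, star_vecMul_eq_zero_of_mem_skewAdjoint hK hKv, hRv, hBv,
      zero_add, Sum.elim_zero_zero]
  simpa using hinj (hzero.trans (zero_vecMul _).symm)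

end Matrix

theorem stmt_19_general {n1 n2 n3 : ℕ}
    (E11 R11 J11 SigG : Matrix (Fin n1) (Fin n1) ℂ)
    (E12 R12 J12 : Matrix (Fin n1) (Fin n2) ℂ)
    (E13 J13 : Matrix (Fin n1) (Fin n3) ℂ)
    (E22 SigR J22 : Matrix (Fin n2) (Fin n2) ℂ)
    (E23 J23 : Matrix (Fin n2) (Fin n3) ℂ)
    (E33 J33 : Matrix (Fin n3) (Fin n3) ℂ)
    (hE : (Matrix.fromBlocks E11 (Matrix.fromCols E12 E13)
        (Matrix.fromRows E12ᴴ E13ᴴ) (Matrix.fromBlocks E22 E23 E23ᴴ E33)).PosSemidef)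
    (hJ : (Matrix.fromBlocks J11 (Matrix.fromCols J12 J13)
        (Matrix.fromRows (-J12ᴴ) (-J13ᴴ)) (Matrix.fromBlocks J22 J23 (-J23ᴴ) J33))ᴴ =
      -(Matrix.fromBlocks J11 (Matrix.fromCols J12 J13)
        (Matrix.fromRows (-J12ᴴ) (-J13ᴴ)) (Matrix.fromBlocks J22 J23 (-J23ᴴ) J33)))
    (hrank : ∀ s : ℂ, s.re = 0 →
      (Matrix.fromCols
          (s • Matrix.fromBlocks E11 (Matrix.fromCols E12 E13)
              (Matrix.fromRows E12ᴴ E13ᴴ) (Matrix.fromBlocks E22 E23 E23ᴴ E33) -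
            (Matrix.fromBlocks J11 (Matrix.fromCols J12 J13)
                (Matrix.fromRows (-J12ᴴ) (-J13ᴴ)) (Matrix.fromBlocks J22 J23 (-J23ᴴ) J33) -
              Matrix.fromBlocks R11 (Matrix.fromCols R12 0)
                (Matrix.fromRows R12ᴴ 0) (Matrix.fromBlocks SigR 0 0 0)))
          (Matrix.fromRows SigG (0 : Matrix (Fin n2 ⊕ Fin n3) (Fin n1) ℂ))).rank
        = n1 + n2 + n3) :
    ∀ s : ℂ, s.re = 0 →
      (Matrix.fromRows (s • E13 - J13)
        (Matrix.fromRows (s • E23 - J23) (s • E33 - J33))).rank = n3 := by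
  intro s hs
  set E := Matrix.fromBlocks E11 (Matrix.fromCols E12 E13)
    (Matrix.fromRows E12ᴴ E13ᴴ) (Matrix.fromBlocks E22 E23 E23ᴴ E33)
  set J := Matrix.fromBlocks J11 (Matrix.fromCols J12 J13)
    (Matrix.fromRows (-J12ᴴ) (-J13ᴴ)) (Matrix.fromBlocks J22 J23 (-J23ᴴ) J33)
  have hskew : s • E - J ∈ skewAdjoint _ := sub_mem
    (IsSelfAdjoint.smul_mem_skewAdjoint (Complex.mem_skewAdjoint_of_re_eq_zero hs) hE.isHermitian)
    (skewAdjoint.mem_iff.mpr hJ)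
  have hfull := hrank s hs
  rw [← sub_add] at hfull
  refine (rank_eq_card_of_mulVec_eq_zero fun x hx => ?_).trans (Fintype.card_fin n3)
  set v : Fin n1 ⊕ (Fin n2 ⊕ Fin n3) → ℂ := Sum.elim 0 (Sum.elim 0 x)
  have hKv : (s • E - J) *ᵥ v = 0 := by
    rw [← hx]
    ext (i | i | i) <;> simp [E, J, v, sub_mulVec, fromBlocks_mulVec, smul_mulVec]
  have hv := eq_zero_of_mulVec_eq_zero_of_rank_fromCols_add hskew
    (hfull.trans (by simp [add_assoc])) hKv
    (by simp [v, Function.star_sumElim, vecMul_fromBlocks])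
    (by simp [v, Function.star_sumElim])
  funext i
  simpa [v] using congrFun hv (Sum.inr (Sum.inr i))

/-- Equation (3.8): if for all purely imaginary s the matrix [sE − (J − R), B] has full
row rank n (with B = [Σ_G; 0; 0], Σ_G ≻ 0), then the third block column of sE − J has
full column rank n3 for all purely imaginary s. -/
theorem stmt_19 {n1 n2 n3 : ℕ}
    (E11 R11 J11 SigG : Matrix (Fin n1) (Fin n1) ℂ)
    (E12 R12 J12 : Matrix (Fin n1) (Fin n2) ℂ)
    (E13 J13 : Matrix (Fin n1) (Fin n3) ℂ)
    (E22 SigR J22 : Matrix (Fin n2) (Fin n2) ℂ)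
    (E23 J23 : Matrix (Fin n2) (Fin n3) ℂ)
    (E33 J33 : Matrix (Fin n3) (Fin n3) ℂ)
    (hE : (Matrix.fromBlocks E11 (Matrix.fromCols E12 E13)
        (Matrix.fromRows E12ᴴ E13ᴴ) (Matrix.fromBlocks E22 E23 E23ᴴ E33)).PosSemidef)
    (hSigG : SigG.PosDef)
    (hJ : (Matrix.fromBlocks J11 (Matrix.fromCols J12 J13)
        (Matrix.fromRows (-J12ᴴ) (-J13ᴴ)) (Matrix.fromBlocks J22 J23 (-J23ᴴ) J33))ᴴ =
      -(Matrix.fromBlocks J11 (Matrix.fromCols J12 J13)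
        (Matrix.fromRows (-J12ᴴ) (-J13ᴴ)) (Matrix.fromBlocks J22 J23 (-J23ᴴ) J33)))
    (hrank : ∀ s : ℂ, s.re = 0 →
      (Matrix.fromCols
          (s • Matrix.fromBlocks E11 (Matrix.fromCols E12 E13)
              (Matrix.fromRows E12ᴴ E13ᴴ) (Matrix.fromBlocks E22 E23 E23ᴴ E33) -
            (Matrix.fromBlocks J11 (Matrix.fromCols J12 J13)
                (Matrix.fromRows (-J12ᴴ) (-J13ᴴ)) (Matrix.fromBlocks J22 J23 (-J23ᴴ) J33) -
              Matrix.fromBlocks R11 (Matrix.fromCols R12 0)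
                (Matrix.fromRows R12ᴴ 0) (Matrix.fromBlocks SigR 0 0 0)))
          (Matrix.fromRows SigG (0 : Matrix (Fin n2 ⊕ Fin n3) (Fin n1) ℂ))).rank
        = n1 + n2 + n3) :
    ∀ s : ℂ, s.re = 0 →
      (Matrix.fromRows (s • E13 - J13)
        (Matrix.fromRows (s • E23 - J23) (s • E33 - J33))).rank = n3 :=
  stmt_19_general E11 R11 J11 SigG E12 R12 J12 E13 J13 E22 SigR J22 E23 J23 E33 J33 hE hJ hrank
end
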